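/- Let K be a field, K_0 ⊆ K_1 ⊆ ... ⊆ K_n ⊆ K finite subfields with |K_i| = d_i, X = [K_0 × ... × K_n] ⊆ P^n(K), and P = (0 : 1 : a_2 : ... : a_n) ∈ X. Then f = t_1(t_1^{d_1 - 1} - t_0^{d_1 - 1}) Π_{i=2}^{n} Π_{λ ∈ K_i \ {a_i}} (t_i - λ t_1) is an indicator function for P of degree 1 + Σ_{i=1}^{n}(d_i - 1). -/

import Mathlib

/-!
If `b ∈ X` is not a multiple of `a`, some factor of `f` vanishes at `b`: the factor `t₁` if
`b₁ = 0`; the factor `t₁^(d₁-1) - t₀^(d₁-1)` if `b₀` and `b₁` are both nonzero, because they lie in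
the finite field `K₁`, on whose units `x ↦ x^(d₁-1)` is constantly `1`; and otherwise `b₀ = 0` and
some `bᵢ/b₁ ∈ Kᵢ` differs from `aᵢ`, so the factor `tᵢ - (bᵢ/b₁) t₁` vanishes. No factor vanishes
at `a` itself, since `a₀ = 0` and `a₁ = 1`.
-/

open Finset MvPolynomial
open scoped LinearAlgebra.Projectivization

theorem Fin.Ioi_zero_eq_insert_one {n : ℕ} (hn : 1 ≤ n) :
    Ioi (0 : Fin (n + 1)) = insert 1 (Ioi 1) := by
  have hv1 : (1 : Fin (n + 1)).val = 1 := by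
    rw [Fin.val_one', Nat.mod_eq_of_lt (by omega)]
  rw [Finset.Ioi_insert]
  ext i
  simp only [mem_Ioi, mem_Ici, Fin.lt_def, Fin.le_def, Fin.val_zero, hv1]
  omega

theorem Subfield.pow_natCard_sub_one_eq_one {K : Type*} [Field K] {F : Subfield K} [Finite F]
    {x : K} (hx : x ∈ F) (hx0 : x ≠ 0) : x ^ (Nat.card F - 1) = 1 := by
  have := Fintype.ofFinite F
  have h := FiniteField.pow_card_sub_one_eq_one (⟨x, hx⟩ : F) (by simpa [Subtype.ext_iff] using hx0)
  rw [Nat.card_eq_fintype_card]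
  exact congrArg F.subtype h

theorem Finset.prod_erase_sub_mul_eq_zero {K : Type*} [Field K] [DecidableEq K] {s : Finset K}
    {x y c : K} (hy : y ≠ 0) (hxy : x / y ∈ s) (hne : x ≠ c * y) :
    ∏ l ∈ s.erase c, (x - l * y) = 0 :=
  prod_eq_zero (i := x / y) (mem_erase.2 ⟨fun h => hne (by rw [← h, div_mul_cancel₀ x hy]), hxy⟩)
    (by rw [div_mul_cancel₀ x hy, sub_self])

section

variable {σ R : Type*} [CommRing R]

theorem MvPolynomial.isHomogeneous_X_sub_C_mul_X (i j : σ) (l : R) :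
    (X i - C l * X j : MvPolynomial σ R).IsHomogeneous 1 :=
  (isHomogeneous_X R i).sub (by simpa using (isHomogeneous_C σ l).mul (isHomogeneous_X R j))

theorem MvPolynomial.isHomogeneous_X_pow_sub_X_pow (i j : σ) (m : ℕ) :
    (X i ^ m - X j ^ m : MvPolynomial σ R).IsHomogeneous m := by
  simpa using ((isHomogeneous_X R i).pow m).sub ((isHomogeneous_X R j).pow m)

end

section IndicatorPoly

variable {K : Type*} [Field K] [DecidableEq K] {n : ℕ}

/-- The paper's indicator function of `(0 : 1 : a₂ : … : aₙ)`, with `S i = Kᵢ` and `m = d₁ - 1`. -/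
noncomputable def indicatorPoly (S : Fin (n + 1) → Finset K) (a : Fin (n + 1) → K) (m : ℕ) :
    MvPolynomial (Fin (n + 1)) K :=
  X 1 * (X 1 ^ m - X 0 ^ m) *
    ∏ i ∈ Ioi (1 : Fin (n + 1)), ∏ l ∈ (S i).erase (a i), (X i - C l * X 1)

variable (S : Fin (n + 1) → Finset K) (a : Fin (n + 1) → K) (m : ℕ)

theorem isHomogeneous_indicatorPoly :
    (indicatorPoly S a m).IsHomogeneous (1 + m + ∑ i ∈ Ioi 1, #((S i).erase (a i))) :=
  ((isHomogeneous_X K 1).mul (isHomogeneous_X_pow_sub_X_pow 1 0 m)).mul <|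
    IsHomogeneous.prod _ _ _ fun i _ => by
      simpa using IsHomogeneous.prod _ _ _ fun l _ => isHomogeneous_X_sub_C_mul_X i 1 l

theorem eval_indicatorPoly (b : Fin (n + 1) → K) :
    eval b (indicatorPoly S a m) = b 1 * (b 1 ^ m - b 0 ^ m) *
      ∏ i ∈ Ioi 1, ∏ l ∈ (S i).erase (a i), (b i - l * b 1) := by
  simp [indicatorPoly]

variable {S a m}

theorem eval_indicatorPoly_self_ne_zero (ha0 : a 0 = 0) (ha1 : a 1 = 1) (hm : m ≠ 0) :
    eval a (indicatorPoly S a m) ≠ 0 := by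
  rw [eval_indicatorPoly, ha0, ha1, zero_pow hm]
  simp only [one_pow, one_mul, mul_one, sub_zero]
  exact prod_ne_zero_iff.2 fun i _ => prod_ne_zero_iff.2 fun l hl =>
    sub_ne_zero.2 (ne_of_mem_erase hl).symm

theorem eval_indicatorPoly_eq_zero_of_ne_smul (hn : 1 ≤ n) (ha0 : a 0 = 0) (ha1 : a 1 = 1)
    {b : Fin (n + 1) → K} (hb0 : b 0 = 0) (hb1 : b 1 ≠ 0) (hbS : ∀ i, 1 < i → b i / b 1 ∈ S i)
    (hne : b 1 • a ≠ b) : eval b (indicatorPoly S a m) = 0 := by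
  obtain ⟨i, hi⟩ := Function.ne_iff.1 hne
  have hi1 : 1 < i := by
    have hi0 : i ≠ 0 := by rintro rfl; simp [ha0, hb0] at hi
    have hi_pos : i ∈ Ioi 0 := mem_Ioi.2 (Fin.pos_iff_ne_zero.2 hi0)
    rcases mem_insert.1 (Fin.Ioi_zero_eq_insert_one hn ▸ hi_pos) with rfl | h
    · simp [ha1] at hi
    · exact mem_Ioi.1 h
  rw [eval_indicatorPoly]
  refine mul_eq_zero_of_right _ (prod_eq_zero (mem_Ioi.2 hi1) ?_)
  exact prod_erase_sub_mul_eq_zero hb1 (hbS i hi1) (by simpa [mul_comm] using (Ne.symm hi))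

theorem eval_indicatorPoly_eq_zero {A : Fin (n + 1) → Subfield K} (hA : Monotone A)
    (hfin : ∀ i, (A i : Set K).Finite) (hn : 1 ≤ n) (ha0 : a 0 = 0) (ha1 : a 1 = 1)
    {b : Fin (n + 1) → K} (hb : ∀ i, b i ∈ A i) (hne : ∀ c : K, c • a ≠ b) :
    eval b (indicatorPoly (fun i => (hfin i).toFinset) a (Nat.card (A 1) - 1)) = 0 := by
  have : Finite (A 1) := hfin 1
  by_cases hb1 : b 1 = 0
  · simp [eval_indicatorPoly, hb1]
  by_cases hb0 : b 0 = 0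
  · refine eval_indicatorPoly_eq_zero_of_ne_smul hn ha0 ha1 hb0 hb1 (fun i hi => ?_) (hne _)
    simpa using (A i).div_mem (hb i) (hA hi.le (hb 1))
  · rw [eval_indicatorPoly, Subfield.pow_natCard_sub_one_eq_one (hb 1) hb1,
      Subfield.pow_natCard_sub_one_eq_one (hA (Fin.zero_le 1) (hb 0)) hb0, sub_self, mul_zero,
      zero_mul]

end IndicatorPoly

theorem stmt_12 (K : Type*) [Field K] [DecidableEq K] (n : ℕ) (hn : 1 ≤ n)
    (A : Fin (n + 1) → Subfield K)
    (hnested : ∀ i j : Fin (n + 1), i ≤ j → A i ≤ A j)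
    (hfin : ∀ i, (A i : Set K).Finite)
    (d : Fin (n + 1) → ℕ) (hd : ∀ i, Nat.card (A i) = d i)
    (a : Fin (n + 1) → K) (ha0 : a 0 = 0) (ha1 : a 1 = 1) (haA : ∀ i, a i ∈ A i)
    (hane : a ≠ 0) :
    (X 1 * (X 1 ^ (d 1 - 1) - X 0 ^ (d 1 - 1)) *
        ∏ i ∈ Ioi (1 : Fin (n + 1)), ∏ l ∈ (hfin i).toFinset.erase (a i),
          (X i - C l * X 1) : MvPolynomial (Fin (n + 1)) K).IsHomogeneous
      (1 + ∑ i ∈ Ioi (0 : Fin (n + 1)), (d i - 1)) ∧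
    eval a (X 1 * (X 1 ^ (d 1 - 1) - X 0 ^ (d 1 - 1)) *
        ∏ i ∈ Ioi (1 : Fin (n + 1)), ∏ l ∈ (hfin i).toFinset.erase (a i),
          (X i - C l * X 1) : MvPolynomial (Fin (n + 1)) K) ≠ 0 ∧
    ∀ (b : Fin (n + 1) → K) (hb : b ≠ 0), (∀ i, b i ∈ A i) →
      Projectivization.mk K b hb ≠ Projectivization.mk K a hane →
      eval b (X 1 * (X 1 ^ (d 1 - 1) - X 0 ^ (d 1 - 1)) *
        ∏ i ∈ Ioi (1 : Fin (n + 1)), ∏ l ∈ (hfin i).toFinset.erase (a i),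
          (X i - C l * X 1) : MvPolynomial (Fin (n + 1)) K) = 0 := by
  have hcard : ∀ i, #((hfin i).toFinset.erase (a i)) = d i - 1 := fun i => by
    rw [card_erase_of_mem ((hfin i).mem_toFinset.2 (haA i)),
      ← Nat.card_eq_card_finite_toFinset, ← hd i]
    rfl
  have hd1 : 2 ≤ d 1 := hd 1 ▸ @Finite.one_lt_card (A 1) (hfin 1) _
  refine ⟨?_, eval_indicatorPoly_self_ne_zero ha0 ha1 (by omega), fun b hb hbA hne => ?_⟩
  · rw [Fin.Ioi_zero_eq_insert_one hn, sum_insert (by simp), ← add_assoc,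
      sum_congr rfl fun i _ => (hcard i).symm]
    exact isHomogeneous_indicatorPoly _ _ _
  · rw [← hd 1]
    exact eval_indicatorPoly_eq_zero (fun i j => hnested i j) hfin hn ha0 ha1 hbA fun c hc =>
      hne ((Projectivization.mk_eq_mk_iff' K b a hb hane).2 ⟨c, hc⟩)
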